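/- arXiv:2004.06167 — 3 statements merged into one kernel-verified Lean document; each statement's English description precedes it below -/
import Mathlib

section
/- Let S = {x_1, ..., x_m} ⊂ ℝ^n. The n-dimensional volume of the zonotope Z = { Σ_i λ_i x_i : λ_i ∈ [0,1] } equals Σ_{A ⊆ S, |A| = n} |det(A)|, where det(A) is the determinant of the n×n matrix whose columns are the elements of A. -/
/-!
Induct on the number of generators. A linear automorphism `A` multiplies both sides by
`|det A|`, so a nonzero first generator may be assumed to be `e₀`. Then `Z(e₀, x) = [0, e₀] + Z(x)`,
and Cavalieri's principle along the `e₀`-axis computes its volume: every line parallel to `e₀`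
meets the convex body `Z(x)` in a segment, which the sweep lengthens by exactly `1`, so the volume
grows by the volume of the shadow of `Z(x)` on `e₀ᗮ`, which is the zonotope of the projected
generators. On the other side, an `n`-subset either avoids `e₀`, or contains it and then its
determinant is the `(n-1)`-minor of the projected generators.
-/

open MeasureTheory Set
open scoped Pointwise

namespace Fin

variable {n m : ℕ}

def consZeroOrderEmb (g : Fin n ↪o Fin m) : Fin (n + 1) ↪o Fin (m + 1) :=
  .ofStrictMono (cons 0 (succ ∘ g))
    (strictMono_cons.2 ⟨fun _ => succ_pos _, strictMono_succ.comp g.strictMono⟩)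

/-- An order embedding `Fin (n + 1) ↪o Fin (m + 1)` either misses `0` or sends `0` to `0`. -/
def orderEmbOfSum : (Fin (n + 1) ↪o Fin m) ⊕ (Fin n ↪o Fin m) → (Fin (n + 1) ↪o Fin (m + 1)) :=
  Sum.elim (·.trans (succOrderEmb m)) consZeroOrderEmb

theorem orderEmbOfSum_injective : Function.Injective (orderEmbOfSum (n := n) (m := m)) := by
  rintro (g | g) (h | h) e <;> simp only [orderEmbOfSum, Sum.elim_inl, Sum.elim_inr] at e
  · exact congrArg _ (RelEmbedding.ext fun j => succ_injective _ (DFunLike.congr_fun e j))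
  · exact absurd (DFunLike.congr_fun e 0) (by simp [consZeroOrderEmb, succ_ne_zero])
  · exact absurd (DFunLike.congr_fun e 0) (by simp [consZeroOrderEmb, (succ_ne_zero _).symm])
  · refine congrArg _ (RelEmbedding.ext fun j => succ_injective _ ?_)
    simpa [consZeroOrderEmb] using DFunLike.congr_fun e j.succ

theorem orderEmbOfSum_surjective : Function.Surjective (orderEmbOfSum (n := n) (m := m)) := by
  intro f
  by_cases h0 : f 0 = 0
  · have hne (j : Fin n) : f j.succ ≠ 0 := by
      rw [← h0]; exact (f.strictMono (succ_pos j)).ne'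
    refine ⟨.inr (.ofStrictMono (fun j => (f j.succ).pred (hne j)) fun i j hij => ?_), ?_⟩
    · simpa [pred_lt_pred_iff] using f.strictMono (succ_lt_succ_iff.2 hij)
    · refine RelEmbedding.ext fun j => ?_
      cases j using Fin.cases
      · exact h0.symm
      · exact succ_pred _ (hne _)
  · have hne (j : Fin (n + 1)) : f j ≠ 0 := fun hj =>
      h0 (le_antisymm (hj ▸ f.monotone (zero_le j)) (zero_le _))
    refine ⟨.inl (.ofStrictMono (fun j => (f j).pred (hne j)) fun i j hij => ?_), ?_⟩
    · simpa [pred_lt_pred_iff] using f.strictMono hij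
    · exact RelEmbedding.ext fun j => succ_pred _ (hne j)

theorem sum_orderEmb_succ {M : Type*} [AddCommMonoid M] (F : (Fin (n + 1) → Fin (m + 1)) → M) :
    ∑ f : Fin (n + 1) ↪o Fin (m + 1), F f =
      ∑ g : Fin (n + 1) ↪o Fin m, F (succ ∘ g) + ∑ g : Fin n ↪o Fin m, F (cons 0 (succ ∘ g)) := by
  rw [← Fintype.sum_bijective _ ⟨orderEmbOfSum_injective, orderEmbOfSum_surjective⟩ _
    (fun f => F f) fun _ => rfl, Fintype.sum_sum_type]
  rfl

end Fin

theorem Finset.sum_attach_powersetCard_univ {α M : Type*} [Fintype α] [LinearOrder α]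
    [AddCommMonoid M] {n : ℕ} (F : (Fin n → α) → M) :
    ∑ s ∈ (univ.powersetCard n : Finset (Finset α)).attach,
        F (fun j => s.1.orderIsoOfFin (mem_powersetCard.mp s.2).2 j) =
      ∑ f : Fin n ↪o α, F f := by
  rw [← univ_eq_attach]
  exact Fintype.sum_equiv ((Equiv.subtypeEquivRight fun _ => mem_powersetCard_univ).trans
    Set.powersetCard.ofFinEmbEquiv.symm) _ _ fun _ => rfl

theorem Matrix.det_of_cons_single_zero {R : Type*} [CommRing R] {n : ℕ}
    (y : Fin n → Fin (n + 1) → R) :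
    (Matrix.of (Fin.cons (Pi.single 0 1) y)).det = (Matrix.of (Fin.tail ∘ y)).det := by
  rw [Matrix.det_succ_row_zero, Fintype.sum_eq_single 0 fun j hj => by simp [hj]]
  simp only [Fin.val_zero, pow_zero, one_mul, Matrix.of_apply, Fin.cons_zero, Pi.single_eq_same,
    mul_one]
  rfl

section MaxMinors

variable {R : Type*} [CommRing R] [LinearOrder R] {n m : ℕ}

/-- The generators are the rows `x i` (the transpose of the column convention, with the same
determinants); `f` enumerates an `n`-subset of them in increasing order. -/
noncomputable def sumAbsMaxMinors (x : Fin m → Fin n → R) : R :=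
  ∑ f : Fin n ↪o Fin m, |(Matrix.of (x ∘ f)).det|

theorem sumAbsMaxMinors_cons (v : Fin (n + 1) → R) (x : Fin m → Fin (n + 1) → R) :
    sumAbsMaxMinors (Fin.cons v x) =
      sumAbsMaxMinors x + ∑ g : Fin n ↪o Fin m, |(Matrix.of (Fin.cons v (x ∘ g))).det| := by
  rw [sumAbsMaxMinors, Fin.sum_orderEmb_succ fun f => |(Matrix.of (Fin.cons v x ∘ f)).det|]
  simp only [← Function.comp_assoc, Fin.cons_comp_succ, Fin.comp_cons, Fin.cons_zero]
  rfl

theorem sumAbsMaxMinors_cons_single (x : Fin m → Fin (n + 1) → R) :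
    sumAbsMaxMinors (Fin.cons (Pi.single 0 1) x) =
      sumAbsMaxMinors x + sumAbsMaxMinors (Fin.tail ∘ x) := by
  simp only [sumAbsMaxMinors_cons, Matrix.det_of_cons_single_zero]
  rfl

theorem sumAbsMaxMinors_no_generators (x : Fin 0 → Fin (n + 1) → R) : sumAbsMaxMinors x = 0 :=
  haveI : IsEmpty (Fin (n + 1) ↪o Fin 0) := ⟨fun f => (f 0).elim0⟩
  Fintype.sum_empty _

variable [IsStrictOrderedRing R]

theorem sumAbsMaxMinors_nonneg (x : Fin m → Fin n → R) : 0 ≤ sumAbsMaxMinors x :=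
  Finset.sum_nonneg fun _ _ => abs_nonneg _

theorem sumAbsMaxMinors_dim_zero (x : Fin m → Fin 0 → R) : sumAbsMaxMinors x = 1 :=
  haveI : Subsingleton (Fin 0 ↪o Fin m) := ⟨fun _ _ => RelEmbedding.ext fun i => i.elim0⟩
  (Fintype.sum_subsingleton _ OrderEmbedding.ofIsEmpty).trans (by simp)

theorem sumAbsMaxMinors_cons_zero (x : Fin m → Fin (n + 1) → R) :
    sumAbsMaxMinors (Fin.cons 0 x) = sumAbsMaxMinors x := by
  rw [sumAbsMaxMinors_cons, add_eq_left]
  exact Finset.sum_eq_zero fun g _ => by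
    rw [Matrix.det_eq_zero_of_row_eq_zero 0 fun j => by simp, abs_zero]

theorem sumAbsMaxMinors_comp (A : (Fin n → R) →ₗ[R] Fin n → R) (x : Fin m → Fin n → R) :
    sumAbsMaxMinors (A ∘ x) = |LinearMap.det A| * sumAbsMaxMinors x := by
  have hdet (v : Fin n → Fin n → R) : (Matrix.of v).det = (Pi.basisFun R (Fin n)).det v := by
    rw [Pi.basisFun_det]; rfl
  simp only [sumAbsMaxMinors, Finset.mul_sum, hdet, Function.comp_assoc,
    Module.Basis.det_comp, abs_mul]

end MaxMinors

theorem exists_linearEquiv_apply_eq {K V : Type*} [Field K] [AddCommGroup V] [Module K V]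
    {v w : V} (hv : v ≠ 0) (hw : w ≠ 0) : ∃ e : V ≃ₗ[K] V, e v = w := by
  classical
  have hv' : LinearIndepOn K id {v} := .singleton hv
  have hw' : LinearIndepOn K id {w} := .singleton hw
  let b := Module.Basis.extend hv'
  let c := Module.Basis.extend hw'
  let iv : hv'.extend (subset_univ _) := ⟨v, hv'.subset_extend _ rfl⟩
  let iw : hw'.extend (subset_univ _) := ⟨w, hw'.subset_extend _ rfl⟩
  let σ := (b.indexEquiv c).trans (Equiv.swap (b.indexEquiv c iv) iw)
  refine ⟨b.equiv c σ, ?_⟩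
  calc b.equiv c σ v = b.equiv c σ (b iv) := by rw [Module.Basis.extend_apply_self]
    _ = w := by simp [σ, c, iw, Module.Basis.extend_apply_self]

section Zonotope

variable {ι E F : Type*} [Fintype ι] [AddCommGroup E] [Module ℝ E] [AddCommGroup F] [Module ℝ F]

def zonotope (x : ι → E) : Set E := Fintype.linearCombination ℝ x '' Icc 0 1

theorem zero_mem_zonotope (x : ι → E) : (0 : E) ∈ zonotope x :=
  ⟨0, ⟨le_rfl, zero_le_one⟩, map_zero _⟩

theorem image_zonotope (A : E →ₗ[ℝ] F) (x : ι → E) : A '' zonotope x = zonotope (A ∘ x) := by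
  simp only [zonotope, image_image, Fintype.linearCombination_apply, map_sum, map_smul]
  rfl

theorem convex_zonotope (x : ι → E) : Convex ℝ (zonotope x) :=
  (convex_Icc 0 1).linear_image _

theorem isCompact_zonotope [TopologicalSpace E] [ContinuousAdd E] [ContinuousSMul ℝ E]
    (x : ι → E) : IsCompact (zonotope x) :=
  isCompact_Icc.image (show Continuous fun lam : ι → ℝ => ∑ i, lam i • x i by fun_prop)

theorem zonotope_cons {m : ℕ} (v : E) (x : Fin m → E) :
    zonotope (Fin.cons v x) = segment ℝ 0 v + zonotope x := by
  ext z
  simp only [zonotope, segment_eq_image', mem_image, mem_add, Fintype.linearCombination_apply,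
    Fin.sum_univ_succ, Fin.cons_zero, Fin.cons_succ, zero_add, sub_zero, mem_Icc]
  constructor
  · rintro ⟨lam, ⟨h0, h1⟩, rfl⟩
    exact ⟨_, ⟨lam 0, ⟨h0 0, h1 0⟩, rfl⟩, _, ⟨Fin.tail lam, ⟨fun i => h0 _, fun i => h1 _⟩, rfl⟩,
      rfl⟩
  · rintro ⟨_, ⟨a, ⟨ha0, ha1⟩, rfl⟩, _, ⟨lam, ⟨h0, h1⟩, rfl⟩, rfl⟩
    refine ⟨Fin.cons a lam, ⟨Fin.le_cons.2 ⟨ha0, h0⟩, Fin.cons_le.2 ⟨ha1, h1⟩⟩, ?_⟩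
    simp

end Zonotope

theorem image_tail_zonotope {m n : ℕ} (x : Fin m → Fin (n + 1) → ℝ) :
    Fin.tail '' zonotope x = zonotope (Fin.tail ∘ x) :=
  image_zonotope (LinearMap.snd ℝ ℝ _ ∘ₗ (Fin.consLinearEquiv ℝ fun _ => ℝ).symm.toLinearMap) x

theorem volume_zonotope_comp {m n : ℕ} (A : (Fin n → ℝ) →ₗ[ℝ] Fin n → ℝ)
    (x : Fin m → Fin n → ℝ) :
    volume (zonotope (A ∘ x)) = ENNReal.ofReal |LinearMap.det A| * volume (zonotope x) := by
  rw [← image_zonotope, Measure.addHaar_image_linearMap]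

theorem isCompact_segment {E : Type*} [AddCommGroup E] [Module ℝ E] [TopologicalSpace E]
    [IsTopologicalAddGroup E] [ContinuousSMul ℝ E] (x y : E) : IsCompact (segment ℝ x y) := by
  rw [← convexHull_pair (𝕜 := ℝ)]
  exact (toFinite {x, y}).isCompact_convexHull (𝕜 := ℝ)

theorem Real.volume_Icc_zero_one_add {A : Set ℝ} (hA : IsCompact A) (hAc : Convex ℝ A)
    (hne : A.Nonempty) : volume (Icc 0 1 + A) = volume A + 1 := by
  have hA_eq := eq_Icc_of_connected_compact ⟨hne, hAc.isPreconnected⟩ hA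
  have hle : sInf A ≤ sSup A := nonempty_Icc.1 (hA_eq ▸ hne)
  rw [hA_eq, Icc_add_Icc zero_le_one hle, Real.volume_Icc, Real.volume_Icc, ← ENNReal.ofReal_one,
    ← ENNReal.ofReal_add (sub_nonneg.2 hle) zero_le_one]
  congr 1
  ring

theorem preimage_prodMk_segment_add {E : Type*} [AddCommGroup E] [Module ℝ E]
    (K : Set (ℝ × E)) (y : E) :
    (fun t => (t, y)) ⁻¹' (segment ℝ 0 (1, 0) + K) = Icc 0 1 + (fun t => (t, y)) ⁻¹' K := by
  ext t
  simp only [segment_eq_image', mem_preimage, mem_add, mem_image, sub_zero, zero_add]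
  constructor
  · rintro ⟨_, ⟨θ, hθ, rfl⟩, p, hp, hsum⟩
    obtain ⟨rfl, rfl⟩ := Prod.ext_iff.1 hsum
    exact ⟨θ, hθ, p.1, by simpa using hp, by simp⟩
  · rintro ⟨θ, hθ, s, hs, rfl⟩
    exact ⟨_, ⟨θ, hθ, rfl⟩, (s, y), hs, by simp⟩

theorem prod_volume_segment_add {E : Type*} [NormedAddCommGroup E] [NormedSpace ℝ E]
    [SecondCountableTopology E] [MeasurableSpace E] [BorelSpace E] (μ : Measure E) [SFinite μ]
    {K : Set (ℝ × E)} (hK : IsCompact K) (hKc : Convex ℝ K) :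
    (volume.prod μ) (segment ℝ 0 (1, 0) + K) = volume.prod μ K + μ (Prod.snd '' K) := by
  have hsection (y : E) : volume ((fun t => (t, y)) ⁻¹' (segment ℝ 0 (1, 0) + K)) =
      volume ((fun t => (t, y)) ⁻¹' K) + (Prod.snd '' K).indicator 1 y := by
    rw [preimage_prodMk_segment_add]
    rcases ((fun t => (t, y)) ⁻¹' K).eq_empty_or_nonempty with h | ⟨t, ht⟩
    · have hy : y ∉ Prod.snd '' K := by
        rintro ⟨⟨t, _⟩, ht, rfl⟩
        exact h.subset ht
      simp [h, hy]
    have hcompact : IsCompact ((fun t => (t, y)) ⁻¹' K) :=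
      (hK.image continuous_fst).of_isClosed_subset (hK.isClosed.preimage (by fun_prop))
        fun t ht => ⟨_, ht, rfl⟩
    have hconvex : Convex ℝ ((fun t => (t, y)) ⁻¹' K) := by
      have : (fun t => (t, y)) ⁻¹' K = LinearMap.inl ℝ ℝ E ⁻¹' ((fun p => (0, y) + p) ⁻¹' K) := by
        ext; simp
      exact this ▸ (hKc.translate_preimage_right (0, y)).linear_preimage _
    rw [indicator_of_mem (show y ∈ Prod.snd '' K from ⟨_, ht, rfl⟩), Pi.one_apply,
      Real.volume_Icc_zero_one_add hcompact hconvex ⟨t, ht⟩]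
  have hshadow : MeasurableSet (Prod.snd '' K) :=
    (hK.image continuous_snd).isClosed.measurableSet
  rw [Measure.prod_apply_symm ((isCompact_segment _ _).add hK).isClosed.measurableSet,
    Measure.prod_apply_symm hK.isClosed.measurableSet, lintegral_congr hsection,
    lintegral_add_right _ (measurable_one.indicator hshadow), lintegral_indicator_one hshadow]

theorem volume_segment_single_zero_add {n : ℕ} {K : Set (Fin (n + 1) → ℝ)} (hK : IsCompact K)
    (hKc : Convex ℝ K) :
    volume (segment ℝ 0 (Pi.single 0 1) + K) = volume K + volume (Fin.tail '' K) := by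
  let L := (Fin.consLinearEquiv ℝ fun _ : Fin (n + 1) => ℝ).symm
  have hL (S : Set (Fin (n + 1) → ℝ)) : volume S = (volume.prod volume) (L '' S) := by
    have hLe : ⇑L = MeasurableEquiv.piFinSuccAbove (fun _ : Fin (n + 1) => ℝ) 0 := by
      ext x <;> simp [L]
    rw [hLe, ← Measure.volume_eq_prod,
      ← (volume_preserving_piFinSuccAbove (fun _ : Fin (n + 1) => ℝ) 0).measure_preimage_equiv,
      MeasurableEquiv.preimage_image]
  have hsegment : L '' segment ℝ 0 (Pi.single 0 1) = segment ℝ 0 (1, 0) := by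
    have hsingle : L (Pi.single 0 1) = (1, 0) := by
      refine Prod.ext ?_ (funext fun j => ?_) <;> simp [L, Fin.tail, Fin.succ_ne_zero]
    rw [← LinearEquiv.coe_toLinearMap, ← LinearMap.coe_toAffineMap, image_segment]
    simp only [LinearMap.coe_toAffineMap, LinearEquiv.coe_toLinearMap, map_zero, hsingle]
  have hLc : Continuous L := L.toLinearMap.continuous_of_finiteDimensional
  rw [hL, hL K, image_add, hsegment,
    prod_volume_segment_add _ (hK.image hLc) (hKc.linear_image _), image_image]
  rfl

theorem volume_zonotope : ∀ {m n : ℕ} (x : Fin m → Fin n → ℝ),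
    volume (zonotope x) = ENNReal.ofReal (sumAbsMaxMinors x)
  | _, 0, x => by
    rw [sumAbsMaxMinors_dim_zero, Subsingleton.eq_univ_of_nonempty ⟨0, zero_mem_zonotope x⟩]
    simp [volume_pi]
  | 0, n + 1, x => by
    rw [sumAbsMaxMinors_no_generators, ENNReal.ofReal_zero]
    refine measure_mono_null (fun z ⟨lam, _, hz⟩ => ?_) (measure_singleton 0)
    simp [← hz, Fintype.linearCombination_apply]
  | m + 1, n + 1, x => by
    rw [← Fin.cons_self_tail x]
    by_cases hv : x 0 = 0
    · rw [hv, zonotope_cons, segment_same, sumAbsMaxMinors_cons_zero]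
      simpa only [singleton_add, zero_add, image_id'] using volume_zonotope _
    obtain ⟨A, hA⟩ := exists_linearEquiv_apply_eq (K := ℝ) hv (Pi.single_ne_zero_iff.2 one_ne_zero)
    have hAx : volume (zonotope (A ∘ Fin.cons (x 0) (Fin.tail x))) =
        ENNReal.ofReal (sumAbsMaxMinors (A ∘ Fin.cons (x 0) (Fin.tail x))) := by
      rw [Fin.comp_cons, hA, zonotope_cons, volume_segment_single_zero_add (isCompact_zonotope _)
        (convex_zonotope _), sumAbsMaxMinors_cons_single, image_tail_zonotope, volume_zonotope,
        volume_zonotope, ENNReal.ofReal_add (sumAbsMaxMinors_nonneg _) (sumAbsMaxMinors_nonneg _)]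
    rw [← LinearEquiv.coe_toLinearMap, volume_zonotope_comp, sumAbsMaxMinors_comp,
      ENNReal.ofReal_mul (abs_nonneg _)] at hAx
    refine (ENNReal.mul_right_inj ?_ ENNReal.ofReal_ne_top).1 hAx
    simpa using (LinearEquiv.isUnit_det' A).ne_zero

/-- Shephard: the volume of the zonotope generated by
`x_1, ..., x_m` is the sum over all `n`-element subsets of the generators of
the absolute determinant of the matrix with those columns. -/
theorem stmt6 {n m : ℕ} (x : Fin m → Fin n → ℝ) :
    volume { z : Fin n → ℝ | ∃ lam : Fin m → ℝ,
        (∀ i, lam i ∈ Set.Icc (0:ℝ) 1) ∧ z = ∑ i, lam i • x i } =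
      ENNReal.ofReal
        (∑ s ∈ (Finset.univ.powersetCard n : Finset (Finset (Fin m))).attach,
          |Matrix.det (Matrix.of fun i j : Fin n =>
            x ((s.1.orderIsoOfFin ((Finset.mem_powersetCard.mp s.2).2)) j) i)|) := by
  have hzonotope : { z : Fin n → ℝ | ∃ lam : Fin m → ℝ,
      (∀ i, lam i ∈ Set.Icc (0:ℝ) 1) ∧ z = ∑ i, lam i • x i } = zonotope x := by
    ext z
    simp [zonotope, Fintype.linearCombination_apply, Pi.le_def, forall_and, eq_comm]
  have hdet (g : Fin n → Fin m) :
      (Matrix.of fun i j => x (g j) i).det = (Matrix.of (x ∘ g)).det :=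
    Matrix.det_transpose _
  simp only [hzonotope, volume_zonotope, hdet,
    Finset.sum_attach_powersetCard_univ fun g => |(Matrix.of (x ∘ g)).det|]
  rfl
end

section
/- Let G = (V, E) be a connected graph with n+1 vertices and let D : E → ℝ^n be a spanning representation mapping the edges of some fixed spanning tree to the standard basis of ℝ^n. Then for every subset A ⊆ E with |A| = n whose image {D(e) : e ∈ A} is linearly independent, A is a spanning tree of G and |det of the matrix with columns D(e), e ∈ A| = 1. Conversely, if A is a spanning tree then {D(e)} is linearly independent. -/
open MeasureTheory

namespace CreditNet

variable {V E : Type}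

/-- A walk in a multigraph with edge-endpoint maps `fst`, `snd`; edges may be
traversed forwards (`fwd`) or backwards (`bwd`). -/
inductive Walk (fst snd : E → V) : V → V → Type where
  | nil (v : V) : Walk fst snd v v
  | fwd (e : E) {y : V} (w : Walk fst snd (snd e) y) : Walk fst snd (fst e) y
  | bwd (e : E) {y : V} (w : Walk fst snd (fst e) y) : Walk fst snd (snd e) y

/-- The signed sum of a map `D` along a walk: `+D e` for forward traversal of an
edge, `-D e` for backward traversal. -/
def wsum {n : ℕ} {fst snd : E → V} (D : E → Fin n → ℝ) :
    {x y : V} → Walk fst snd x y → (Fin n → ℝ)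
  | _, _, .nil _ => 0
  | _, _, .fwd e w => D e + wsum D w
  | _, _, .bwd e w => (-D e) + wsum D w

/-- One adjacency step: either an edge of `T` joins `u` and `v`, or the extra
identification relation `R` relates them (in either order). -/
def Step (fst snd : E → V) (T : Finset E) (R : V → V → Prop) (u v : V) : Prop :=
  (∃ e ∈ T, (fst e = u ∧ snd e = v) ∨ (fst e = v ∧ snd e = u)) ∨ R u v ∨ R v u

/-- The graph restricted to edge set `T`, with vertices additionally identified
according to `R`, is connected. -/
def ConnVia (fst snd : E → V) (T : Finset E) (R : V → V → Prop) : Prop :=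
  ∀ u v : V, Relation.ReflTransGen (Step fst snd T R) u v

/-- No vertex identifications. -/
def NoRel : V → V → Prop := fun _ _ => False

/-- Identify the vertices `x` and `y`. -/
def Rid (x y : V) : V → V → Prop := fun u v => u = x ∧ v = y

/-- Identify `x` with `y` and `a` with `b`. -/
def Rid2 (x y a b : V) : V → V → Prop := fun u v => (u = x ∧ v = y) ∨ (u = a ∧ v = b)

/-- `T` is a spanning tree of the graph with vertex identifications `R`:
a minimal connecting edge set. -/
def IsSTree [DecidableEq E] (fst snd : E → V) (R : V → V → Prop) (T : Finset E) : Prop :=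
  ConnVia fst snd T R ∧ ∀ e ∈ T, ¬ ConnVia fst snd (T.erase e) R

open Classical in
/-- The weighted spanning-tree generating polynomial
`Γ(c) = Σ_{T spanning tree} Π_{e ∈ T} c e` of the graph with vertex
identifications `R`. -/
noncomputable def treePoly [Fintype E] (fst snd : E → V) (R : V → V → Prop) (c : E → ℝ) : ℝ :=
  ∑ T ∈ Finset.univ.filter (fun T => IsSTree fst snd R T), ∏ e ∈ T, c e

open Classical in
/-- A spanning representation: signed sums along closed walks vanish, and the
images of the edges of any spanning tree span `ℝ^n`. -/
def IsSpanningRep [Fintype E] {n : ℕ} (fst snd : E → V) (D : E → Fin n → ℝ) : Prop :=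
  (∀ (x : V) (w : Walk fst snd x x), wsum D w = 0) ∧
  (∀ T : Finset E, IsSTree fst snd NoRel T →
    Submodule.span ℝ (Set.range fun e : T => D e.1) = (⊤ : Submodule ℝ (Fin n → ℝ)))

/-- An escrow configuration: nonnegative, the two directions of each edge sum
to the capacity, and zero off the edges. -/
def IsConfig (fst snd : E → V) (c : E → ℝ) (w : V → V → ℝ) : Prop :=
  (∀ u v, 0 ≤ w u v) ∧
  (∀ e, w (fst e) (snd e) + w (snd e) (fst e) = c e) ∧
  (∀ u v, (¬ ∃ e, (fst e = u ∧ snd e = v) ∨ (fst e = v ∧ snd e = u)) → w u v = 0)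

/-- The represented score of a configuration: sum over positively-oriented
edges of the escrow owned by the tail, times the edge direction. -/
noncomputable def score [Fintype E] {n : ℕ} (fst snd : E → V) (D : E → Fin n → ℝ)
    (w : V → V → ℝ) : Fin n → ℝ :=
  ∑ e : E, w (fst e) (snd e) • D e

/-- Pay `k` units from `u` to `v` across the edge `(u,v)`. -/
def payEdge [DecidableEq V] (u v : V) (k : ℝ) (w : V → V → ℝ) : V → V → ℝ :=
  fun a b =>
    if a = u ∧ b = v then w a b - k
    else if a = v ∧ b = u then w a b + k else w a b

/-- Execute a payment of `k` units along each edge of a walk. -/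
def exec [DecidableEq V] {fst snd : E → V} (k : ℝ) :
    {x y : V} → Walk fst snd x y → (V → V → ℝ) → (V → V → ℝ)
  | _, _, .nil _, w => w
  | _, _, .fwd e p, w => exec k p (payEdge (fst e) (snd e) k w)
  | _, _, .bwd e p, w => exec k p (payEdge (snd e) (fst e) k w)

/-- Feasibility of paying `k` units along each edge of a walk in turn. -/
def Feasible [DecidableEq V] {fst snd : E → V} (k : ℝ) :
    {x y : V} → Walk fst snd x y → (V → V → ℝ) → Prop
  | _, _, .nil _, _ => True
  | _, _, .fwd e p, w => k ≤ w (fst e) (snd e) ∧ Feasible k p (payEdge (fst e) (snd e) k w)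
  | _, _, .bwd e p, w => k ≤ w (snd e) (fst e) ∧ Feasible k p (payEdge (snd e) (fst e) k w)

/-- The zonotope (Minkowski sum of segments) generated by a family of vectors. -/
def zonotope {ι : Type} [Fintype ι] {n : ℕ} (g : ι → Fin n → ℝ) : Set (Fin n → ℝ) :=
  { z | ∃ lam : ι → ℝ, (∀ i, lam i ∈ Set.Icc (0:ℝ) 1) ∧ z = ∑ i, lam i • g i }

end CreditNet

open CreditNet

/-! The cycle condition makes `D` the coboundary of a potential `φ : V → ℝⁿ`, so `D e` is the
signed sum of `D` along any path joining the ends of `e`; in particular `D e` lies in the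
ℤ-span of the images of any connected edge set. If the images of `A` span, `A` is connected:
the increment of the indicator of an `A`-component is a linear functional of `D` (determined by
its values on the basis `D(T0)`), it vanishes on `D(A)`, hence everywhere. Minimality is linear
independence. Finally the columns `D(en j)` and the standard basis generate the same ℤ-lattice,
so the determinant is a unit of ℤ. -/

theorem Matrix.abs_det_eq_one_of_span_int {n : ℕ} (v : Fin n → Fin n → ℝ)
    (hv : ∀ j, v j ∈ Submodule.span ℤ (Set.range fun i => Pi.single i 1))
    (hstd : ∀ i, Pi.single i 1 ∈ Submodule.span ℤ (Set.range v)) :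
    |(Matrix.of fun i j => v j i).det| = 1 := by
  choose a ha using fun j => (Submodule.mem_span_range_iff_exists_fun ℤ).1 (hv j)
  choose b hb using fun i => (Submodule.mem_span_range_iff_exists_fun ℤ).1 (hstd i)
  let M : Matrix (Fin n) (Fin n) ℤ := .of fun i j => a j i
  let B : Matrix (Fin n) (Fin n) ℤ := .of fun j i => b i j
  have hMv : (Matrix.of fun i j => v j i) = (Int.castRingHom ℝ).mapMatrix M := by
    ext i j
    simp [M, ← ha j, Finset.sum_apply, Pi.single_apply]
  have hMB : M * B = 1 := by
    apply Matrix.map_injective (f := Int.castRingHom ℝ) (RingHom.injective_int _)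
    dsimp only
    rw [Matrix.map_mul, Matrix.map_one _ (map_zero _) (map_one _), ← RingHom.mapMatrix_apply,
      ← hMv]
    ext k i
    simpa [Matrix.mul_apply, B, Finset.sum_apply, mul_comm, Matrix.one_apply, Pi.single_apply]
      using congrFun (hb i) k
  have hunit : |M.det| = 1 := Int.isUnit_iff_abs_eq.1 (Matrix.isUnit_det_of_right_inverse hMB)
  rw [hMv, ← RingHom.map_det, eq_intCast, ← Int.cast_abs, hunit, Int.cast_one]

namespace CreditNet

variable {V E : Type} {fst snd : E → V}

namespace Walk

def append : {x y z : V} → Walk fst snd x y → Walk fst snd y z → Walk fst snd x z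
  | _, _, _, .nil _, q => q
  | _, _, _, .fwd e p, q => .fwd e (p.append q)
  | _, _, _, .bwd e p, q => .bwd e (p.append q)

def reverse : {x y : V} → Walk fst snd x y → Walk fst snd y x
  | _, _, .nil v => .nil v
  | _, _, .fwd e p => p.reverse.append (.bwd e (.nil _))
  | _, _, .bwd e p => p.reverse.append (.fwd e (.nil _))

end Walk

section Walks

variable {n : ℕ} {D : E → Fin n → ℝ}

lemma wsum_append {x y z : V} (p : Walk fst snd x y) (q : Walk fst snd y z) :
    wsum D (p.append q) = wsum D p + wsum D q := by
  induction p with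
  | nil => simp [Walk.append, wsum]
  | fwd e p ih => simp [Walk.append, wsum, ih, add_assoc]
  | bwd e p ih => simp [Walk.append, wsum, ih, add_assoc]

lemma wsum_reverse {x y : V} (p : Walk fst snd x y) : wsum D p.reverse = -wsum D p := by
  induction p with
  | nil => simp [Walk.reverse, wsum]
  | fwd e p ih => simp [Walk.reverse, wsum_append, wsum, ih]
  | bwd e p ih => simp [Walk.reverse, wsum_append, wsum, ih]

lemma wsum_eq_of_forall_closed (hc : ∀ (x : V) (w : Walk fst snd x x), wsum D w = 0)
    {x y : V} (p q : Walk fst snd x y) : wsum D p = wsum D q := by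
  have h := hc x (p.append q.reverse)
  rwa [wsum_append, wsum_reverse, add_neg_eq_zero] at h

end Walks

section Reachability

variable {S : Finset E}

lemma step_symm {R : V → V → Prop} {u v : V} (h : Step fst snd S R u v) :
    Step fst snd S R v u := by
  rcases h with ⟨e, he, h | h⟩ | h | h
  · exact Or.inl ⟨e, he, Or.inr h⟩
  · exact Or.inl ⟨e, he, Or.inl h⟩
  · exact Or.inr (Or.inr h)
  · exact Or.inr (Or.inl h)

instance {R : V → V → Prop} : Std.Symm (Step fst snd S R) := ⟨fun _ _ => step_symm⟩

lemma reflTransGen_step_symm {R : V → V → Prop} {u v : V}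
    (h : Relation.ReflTransGen (Step fst snd S R) u v) :
    Relation.ReflTransGen (Step fst snd S R) v u :=
  Std.Symm.symm _ _ h

lemma reflTransGen_step_of_mem {e : E} (he : e ∈ S) :
    Relation.ReflTransGen (Step fst snd S NoRel) (fst e) (snd e) :=
  .single (Or.inl ⟨e, he, Or.inl ⟨rfl, rfl⟩⟩)

lemma reflTransGen_step_rec {u : V} {P : V → Prop} (hu : P u)
    (hfwd : ∀ e ∈ S, P (fst e) → P (snd e)) (hbwd : ∀ e ∈ S, P (snd e) → P (fst e))
    {v : V} (h : Relation.ReflTransGen (Step fst snd S NoRel) u v) : P v := by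
  induction h with
  | refl => exact hu
  | tail _ hstep ih =>
    rcases hstep with ⟨e, he, ⟨rfl, rfl⟩ | ⟨rfl, rfl⟩⟩ | hF | hF
    · exact hfwd e he ih
    · exact hbwd e he ih
    · exact hF.elim
    · exact hF.elim

lemma nonempty_walk_of_reflTransGen {u v : V}
    (h : Relation.ReflTransGen (Step fst snd S NoRel) u v) : Nonempty (Walk fst snd u v) :=
  reflTransGen_step_rec (P := fun v => Nonempty (Walk fst snd u v)) ⟨.nil u⟩
    (fun e _ ⟨w⟩ => ⟨w.append (.fwd e (.nil _))⟩)
    (fun e _ ⟨w⟩ => ⟨w.append (.bwd e (.nil _))⟩) h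

lemma eq_of_reflTransGen_step {α : Type*} {g : V → α} (hg : ∀ e ∈ S, g (fst e) = g (snd e))
    {u v : V} (h : Relation.ReflTransGen (Step fst snd S NoRel) u v) : g u = g v :=
  reflTransGen_step_rec (P := fun v => g u = g v) rfl
    (fun e he h => h.trans (hg e he)) (fun e he h => h.trans (hg e he).symm) h

lemma connVia_of_forall_eq
    (h : ∀ g : V → ℝ, (∀ e ∈ S, g (fst e) = g (snd e)) → ∀ u v, g u = g v) :
    ConnVia fst snd S NoRel := by
  classical
  intro u v
  let g : V → ℝ := fun x => if Relation.ReflTransGen (Step fst snd S NoRel) u x then 1 else 0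
  have hg : ∀ e ∈ S, g (fst e) = g (snd e) := by
    intro e he
    have h₁ : Relation.ReflTransGen (Step fst snd S NoRel) (fst e) (snd e) :=
      reflTransGen_step_of_mem he
    have h₂ := reflTransGen_step_symm h₁
    simp only [g]
    congr 1
    exact propext ⟨fun h => h.trans h₁, fun h => h.trans h₂⟩
  by_contra huv
  have := h g hg u v
  simp [g, huv, Relation.ReflTransGen.refl] at this

end Reachability

section Potential

variable {n : ℕ} {D : E → Fin n → ℝ} {S : Finset E}

lemma exists_potential (hc : ∀ (x : V) (w : Walk fst snd x x), wsum D w = 0)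
    (hS : ConnVia fst snd S NoRel) :
    ∃ φ : V → Fin n → ℝ, ∀ e, φ (snd e) = φ (fst e) + D e := by
  rcases isEmpty_or_nonempty V with _ | ⟨⟨r⟩⟩
  · exact ⟨isEmptyElim, fun e => isEmptyElim (fst e)⟩
  let w : ∀ v, Walk fst snd r v := fun v => (nonempty_walk_of_reflTransGen (hS r v)).some
  refine ⟨fun v => wsum D (w v), fun e => ?_⟩
  dsimp only
  rw [wsum_eq_of_forall_closed hc (w (snd e)) ((w (fst e)).append (.fwd e (.nil _))),
    wsum_append]
  simp [wsum]

lemma sub_mem_span_of_reflTransGen {R : Type*} [Ring R] [Module R (Fin n → ℝ)]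
    {φ : V → Fin n → ℝ} (hφ : ∀ e, φ (snd e) = φ (fst e) + D e) {u v : V}
    (h : Relation.ReflTransGen (Step fst snd S NoRel) u v) :
    φ v - φ u ∈ Submodule.span R (D '' S) := by
  refine reflTransGen_step_rec (P := fun v => φ v - φ u ∈ Submodule.span R (D '' S))
    (by simp) (fun e he h => ?_) (fun e he h => ?_) h
  · rw [hφ, add_sub_right_comm]
    exact add_mem h (Submodule.subset_span ⟨e, he, rfl⟩)
  · rw [hφ, add_sub_right_comm] at h
    simpa using sub_mem h (Submodule.subset_span ⟨e, he, rfl⟩)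

lemma mem_span_image_of_connVia {R : Type*} [Ring R] [Module R (Fin n → ℝ)]
    (hc : ∀ (x : V) (w : Walk fst snd x x), wsum D w = 0) (hS : ConnVia fst snd S NoRel)
    (e : E) : D e ∈ Submodule.span R (D '' S) := by
  obtain ⟨φ, hφ⟩ := exists_potential hc hS
  simpa [hφ e] using sub_mem_span_of_reflTransGen (R := R) hφ (hS (fst e) (snd e))

lemma linearMap_apply_eq_sub_of_connVia (hc : ∀ (x : V) (w : Walk fst snd x x), wsum D w = 0)
    (hS : ConnVia fst snd S NoRel) (L : (Fin n → ℝ) →ₗ[ℝ] ℝ) (g : V → ℝ)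
    (hL : ∀ f ∈ S, L (D f) = g (snd f) - g (fst f)) (e : E) :
    L (D e) = g (snd e) - g (fst e) := by
  obtain ⟨φ, hφ⟩ := exists_potential hc hS
  have hψ : ∀ f ∈ S, L (φ (fst f)) - g (fst f) = L (φ (snd f)) - g (snd f) := by
    intro f hf
    rw [hφ, map_add, hL f hf]
    ring
  have := eq_of_reflTransGen_step (g := fun v => L (φ v) - g v) hψ (hS (fst e) (snd e))
  rw [hφ, map_add] at this
  linarith

end Potential

section SpanningRep

variable {n : ℕ} {D : E → Fin n → ℝ}

lemma connVia_of_span_eq_top (hc : ∀ (x : V) (w : Walk fst snd x x), wsum D w = 0)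
    {T₀ : Finset E} (hT₀ : ConnVia fst snd T₀ NoRel) {t : Fin n → E}
    (hTt : ∀ e ∈ T₀, ∃ i, t i = e) (hbasis : ∀ i, D (t i) = Pi.single i 1)
    {A : Finset E} (hspan : Submodule.span ℝ (D '' A) = ⊤) : ConnVia fst snd A NoRel := by
  refine connVia_of_forall_eq fun g hg u v => ?_
  let L := (Pi.basisFun ℝ (Fin n)).constr ℝ fun i => g (snd (t i)) - g (fst (t i))
  have hL : ∀ e, L (D e) = g (snd e) - g (fst e) := by
    refine linearMap_apply_eq_sub_of_connVia hc hT₀ L g fun f hf => ?_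
    obtain ⟨i, rfl⟩ := hTt f hf
    rw [hbasis, ← Pi.basisFun_apply ℝ, Module.Basis.constr_basis]
  have hL0 : L = 0 := by
    refine LinearMap.ext_on hspan ?_
    rintro _ ⟨e, he, rfl⟩
    simp [hL, hg e he]
  refine eq_of_reflTransGen_step (fun f _ => ?_) (hT₀ u v)
  have := hL f
  rw [hL0, LinearMap.zero_apply] at this
  linarith

lemma not_connVia_erase_of_linearIndepOn [DecidableEq E]
    (hc : ∀ (x : V) (w : Walk fst snd x x), wsum D w = 0) {A : Finset E}
    (hli : LinearIndepOn ℝ D (A : Set E)) {e : E} (he : e ∈ A) :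
    ¬ ConnVia fst snd (A.erase e) NoRel := fun hconn =>
  hli.notMem_span he (by simpa using mem_span_image_of_connVia (R := ℝ) hc hconn e)

lemma isSTree_of_linearIndepOn [DecidableEq E]
    (hc : ∀ (x : V) (w : Walk fst snd x x), wsum D w = 0)
    {T₀ : Finset E} (hT₀ : ConnVia fst snd T₀ NoRel) {t : Fin n → E}
    (hTt : ∀ e ∈ T₀, ∃ i, t i = e) (hbasis : ∀ i, D (t i) = Pi.single i 1)
    {A : Finset E} (hli : LinearIndepOn ℝ D (A : Set E)) (hA : A.card = n) :
    IsSTree fst snd NoRel A := by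
  have hspan : Submodule.span ℝ (D '' A) = ⊤ := by
    rw [Set.image_eq_range]
    exact LinearIndependent.span_eq_top_of_card_eq_finrank' hli (by simp [hA])
  exact ⟨connVia_of_span_eq_top hc hT₀ hTt hbasis hspan,
    fun e he => not_connVia_erase_of_linearIndepOn hc hli he⟩

lemma image_subset_range_single {T₀ : Finset E} {t : Fin n → E}
    (hTt : ∀ e ∈ T₀, ∃ i, t i = e) (hbasis : ∀ i, D (t i) = Pi.single i 1) :
    D '' T₀ ⊆ Set.range fun i => Pi.single i 1 := by
  rintro _ ⟨e, he, rfl⟩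
  obtain ⟨i, rfl⟩ := hTt e he
  exact ⟨i, (hbasis i).symm⟩

end SpanningRep

end CreditNet

theorem stmt7_general {V E : Type} [Fintype E] [DecidableEq E]
    (fst snd : E → V) (n : ℕ)
    (D : E → Fin n → ℝ) (hD : IsSpanningRep fst snd D)
    (T0 : Finset E) (hT0 : IsSTree fst snd NoRel T0)
    (t : Fin n → E)
    (hTt : ∀ e ∈ T0, ∃ i, t i = e)
    (hbasis : ∀ i : Fin n, D (t i) = Pi.single i 1)
    (A : Finset E) (hA : A.card = n) :
    (LinearIndependent ℝ (fun a : A => D a.1) →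
      IsSTree fst snd NoRel A ∧
      ∀ en : Fin n → E, Function.Injective en → (∀ j, en j ∈ A) →
        |Matrix.det (Matrix.of fun i j : Fin n => D (en j) i)| = 1) ∧
    (IsSTree fst snd NoRel A → LinearIndependent ℝ (fun a : A => D a.1)) := by
  have hcardA : Fintype.card A = Module.finrank ℝ (Fin n → ℝ) := by simp [hA]
  refine ⟨fun hli => ?_, fun hAtree => ?_⟩
  · have hAtree := isSTree_of_linearIndepOn hD.1 hT0.1 hTt hbasis hli hA
    refine ⟨hAtree, fun en hen hmem => Matrix.abs_det_eq_one_of_span_int _ (fun j => ?_) ?_⟩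
    · exact Submodule.span_mono (image_subset_range_single hTt hbasis)
        (mem_span_image_of_connVia hD.1 hT0.1 (en j))
    · have hA_eq : Finset.univ.image en = A :=
        Finset.eq_of_subset_of_card_le (Finset.image_subset_iff.2 fun j _ => hmem j)
          (by rw [Finset.card_image_of_injective _ hen, hA, Finset.card_univ, Fintype.card_fin])
      intro i
      rw [← hbasis i, Set.range_comp', ← Set.image_univ, ← Finset.coe_univ, ← Finset.coe_image,
        hA_eq]
      exact mem_span_image_of_connVia hD.1 hAtree.1 (t i)
  · exact linearIndependent_of_top_le_span_of_card_eq_finrank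
      (hD.2 A (by convert hAtree)).ge hcardA

/-- unimodularity: for a spanning representation mapping a fixed
spanning tree to the standard basis, an `n`-element edge set has linearly
independent image iff it is a spanning tree, in which case the matrix whose
columns are its images (in any order) has determinant of absolute value 1. -/
theorem stmt7 {V E : Type} [Fintype V] [Fintype E] [DecidableEq E]
    (fst snd : E → V) (n : ℕ) (hcard : Fintype.card V = n + 1)
    (hconn : ConnVia fst snd Finset.univ NoRel)
    (D : E → Fin n → ℝ) (hD : IsSpanningRep fst snd D)
    (T0 : Finset E) (hT0 : IsSTree fst snd NoRel T0)
    (t : Fin n → E) (ht : Function.Injective t)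
    (htT : ∀ i, t i ∈ T0) (hTt : ∀ e ∈ T0, ∃ i, t i = e)
    (hbasis : ∀ i : Fin n, D (t i) = Pi.single i 1)
    (A : Finset E) (hA : A.card = n) :
    (LinearIndependent ℝ (fun a : A => D a.1) →
      IsSTree fst snd NoRel A ∧
      ∀ en : Fin n → E, Function.Injective en → (∀ j, en j ∈ A) →
        |Matrix.det (Matrix.of fun i j : Fin n => D (en j) i)| = 1) ∧
    (IsSTree fst snd NoRel A → LinearIndependent ℝ (fun a : A => D a.1)) :=
  stmt7_general fst snd n D hD T0 hT0 t hTt hbasis A hA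
end

section
/- (Uniform measure is stationary under symmetric transactions) Let Z ⊂ ℝ^n be a compact convex body, and consider the Markov transition kernel that, from state z, samples a direction u from a finite set X' of vectors (with probabilities φ) and a size c from a distribution k_u that is symmetric about 0, then moves to z − c·u if z − c·u ∈ Z and stays at z otherwise. Then the uniform (normalized Lebesgue) measure on Z is invariant for this kernel. Key step: for any measurable A ⊆ Z and any fixed vector v, μ(A_v^1) + μ(A_v^2) + μ(A_{−v}^1) + μ(A_{−v}^2) = 2μ(A), where A_v^1 = {z ∈ Z : z − v ∈ A} and A_v^2 = {z ∈ A : z − v ∉ Z} and μ is Lebesgue measure. -/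
/-!
Translating by `v` maps `{z ∈ Z | z - v ∈ A}` onto `{w ∈ A | w + v ∈ Z}`, so by translation
invariance its measure and that of `{w ∈ A | w + v ∉ Z}` add up to `μ A`. Pairing the terms for
`v` and `-v` this way gives the four-term identity. From a state in `Z`, the kernel lands in `A`
with step `v` exactly on `{z ∈ Z | z - v ∈ A} ∪ {z ∈ A | z - v ∉ Z}`, so the masses for the
steps `s • u` and `(-s) • u` add up to `2 μ A`; averaging over a symmetric law of `s` gives `μ A`.
-/

open MeasureTheory

section TranslationInvariant

variable {G : Type*} [AddCommGroup G] [MeasurableSpace G] [MeasurableAdd G]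
  (μ : Measure G) [μ.IsAddRightInvariant] {Z A : Set G}

theorem measure_sub_mem_add_measure_add_notMem (hZ : MeasurableSet Z) (v : G) :
    μ {z ∈ Z | z - v ∈ A} + μ {z ∈ A | z + v ∉ Z} = μ A := by
  have htranslate : {z ∈ Z | z - v ∈ A} = (· + -v) ⁻¹' {w ∈ A | w + v ∈ Z} := by
    ext z
    simp [← sub_eq_add_neg, and_comm]
  rw [htranslate, measure_preimage_add_right]
  exact measure_inter_add_sdiff A (measurable_add_const v hZ)

theorem measure_sub_mem_add_measure_sub_notMem_add_neg (hZ : MeasurableSet Z) (v : G) :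
    μ {z ∈ Z | z - v ∈ A} + μ {z ∈ A | z - v ∉ Z} +
        μ {z ∈ Z | z + v ∈ A} + μ {z ∈ A | z + v ∉ Z} = 2 * μ A := by
  have hneg := measure_sub_mem_add_measure_add_notMem μ (A := A) hZ (-v)
  simp only [sub_neg_eq_add, ← sub_eq_add_neg] at hneg
  rw [two_mul, ← congrArg₂ (· + ·) (measure_sub_mem_add_measure_add_notMem μ hZ v) hneg]
  ring

end TranslationInvariant

theorem measure_moveOrStay_eq {G : Type*} [AddGroup G] [MeasurableSpace G] [MeasurableSub G]
    (μ : Measure G) {Z A : Set G} (hZ : MeasurableSet Z) (hA : MeasurableSet A) (hAZ : A ⊆ Z)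
    (v : G) :
    μ {z ∈ Z | (z - v ∈ Z ∧ z - v ∈ A) ∨ (z - v ∉ Z ∧ z ∈ A)} =
      μ {z ∈ Z | z - v ∈ A} + μ {z ∈ A | z - v ∉ Z} := by
  have hsplit : {z ∈ Z | (z - v ∈ Z ∧ z - v ∈ A) ∨ (z - v ∉ Z ∧ z ∈ A)} =
      {z ∈ Z | z - v ∈ A} ∪ {z ∈ A | z - v ∉ Z} := by
    ext z
    constructor
    · rintro ⟨hz, ⟨-, hmove⟩ | ⟨hstay, hzA⟩⟩
      exacts [Or.inl ⟨hz, hmove⟩, Or.inr ⟨hzA, hstay⟩]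
    · rintro (⟨hz, hmove⟩ | ⟨hzA, hstay⟩)
      exacts [⟨hz, Or.inl ⟨hAZ hmove, hmove⟩⟩, ⟨hAZ hzA, Or.inr ⟨hstay, hzA⟩⟩]
  rw [hsplit]
  exact measure_union (Set.disjoint_left.2 fun _ h h' => h'.2 (hAZ h.2))
    (hA.diff (measurable_sub_const v hZ))

theorem measurable_measure_moveOrStay {G : Type*} [AddCommGroup G] [Module ℝ G]
    [MeasurableSpace G] [MeasurableSub₂ G] [MeasurableSMul ℝ G] (μ : Measure G) [SFinite μ]
    {Z A : Set G} (hZ : MeasurableSet Z) (hA : MeasurableSet A) (u : G) :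
    Measurable fun s : ℝ =>
      μ {z ∈ Z | (z - s • u ∈ Z ∧ z - s • u ∈ A) ∨ (z - s • u ∉ Z ∧ z ∈ A)} := by
  have hstep : Measurable fun p : ℝ × G => p.2 - p.1 • u :=
    measurable_snd.sub (measurable_fst.smul_const u)
  exact measurable_measure_prodMk_left <| (measurable_snd hZ).inter <|
    ((hstep hZ).inter (hstep hA)).union ((hstep hZ.compl).inter (measurable_snd hA))

theorem lintegral_eq_of_add_comp_neg_eq_two_mul {α : Type*} [MeasurableSpace α]
    [InvolutiveNeg α] [MeasurableNeg α] {κ : Measure α} [IsProbabilityMeasure κ]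
    (hsym : κ.map (fun s => -s) = κ) {g : α → ENNReal} (hg : Measurable g) {c : ENNReal}
    (hpair : ∀ s, g s + g (-s) = 2 * c) : ∫⁻ s, g s ∂κ = c := by
  have hflip : ∫⁻ s, g (-s) ∂κ = ∫⁻ s, g s ∂κ := by
    conv_rhs => rw [← hsym]
    exact (lintegral_map_equiv g (MeasurableEquiv.neg α)).symm
  have htwice : 2 * ∫⁻ s, g s ∂κ = 2 * c := by
    calc 2 * ∫⁻ s, g s ∂κ = ∫⁻ s, g s + g (-s) ∂κ := by
          rw [lintegral_add_left hg, hflip, two_mul]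
      _ = 2 * c := by simp only [hpair, lintegral_const, measure_univ, mul_one]
  exact (ENNReal.mul_right_inj two_ne_zero ENNReal.ofNat_ne_top).1 htwice

theorem stmt19_general {n m : ℕ} (Z : Set (Fin n → ℝ))
    (hZc : IsCompact Z)
    (x : Fin m → Fin n → ℝ)
    (φ : Fin m → ℝ) (hφ : ∀ i, 0 ≤ φ i) (hφ1 : ∑ i, φ i = 1)
    (κ : Fin m → Measure ℝ) (hκ : ∀ i, IsProbabilityMeasure (κ i))
    (hsym : ∀ i, (κ i).map (fun s => -s) = κ i) :
    (∀ A : Set (Fin n → ℝ), MeasurableSet A → A ⊆ Z →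
      volume A = ∑ i, ENNReal.ofReal (φ i) *
        ∫⁻ s, volume { z ∈ Z |
          (z - s • x i ∈ Z ∧ z - s • x i ∈ A) ∨ (z - s • x i ∉ Z ∧ z ∈ A) }
          ∂(κ i)) ∧
    (∀ A : Set (Fin n → ℝ), MeasurableSet A → A ⊆ Z → ∀ v : Fin n → ℝ,
      volume { z ∈ Z | z - v ∈ A } + volume { z ∈ A | z - v ∉ Z } +
        volume { z ∈ Z | z + v ∈ A } + volume { z ∈ A | z + v ∉ Z } =
      2 * volume A) := by
  have hZ : MeasurableSet Z := hZc.measurableSet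
  refine ⟨fun A hA hAZ => ?_,
    fun A _ _ v => measure_sub_mem_add_measure_sub_notMem_add_neg volume hZ v⟩
  have hstep : ∀ i, ∫⁻ s, volume {z ∈ Z |
      (z - s • x i ∈ Z ∧ z - s • x i ∈ A) ∨ (z - s • x i ∉ Z ∧ z ∈ A)} ∂(κ i) = volume A := by
    intro i
    have := hκ i
    refine lintegral_eq_of_add_comp_neg_eq_two_mul (hsym i)
      (measurable_measure_moveOrStay volume hZ hA (x i)) fun s => ?_
    rw [measure_moveOrStay_eq volume hZ hA hAZ, measure_moveOrStay_eq volume hZ hA hAZ, neg_smul,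
      ← add_assoc]
    simpa only [sub_neg_eq_add] using
      measure_sub_mem_add_measure_sub_notMem_add_neg volume hZ (s • x i)
  simp only [hstep, ← Finset.sum_mul, ← ENNReal.ofReal_sum_of_nonneg fun i _ => hφ i, hφ1,
    ENNReal.ofReal_one, one_mul]

/-- the uniform measure on a compact convex body `Z` is invariant
for the Markov kernel that samples a direction `x i` with probability `φ i` and
a size `t` from a distribution `κ i` symmetric about `0`, then moves from `z`
to `z − t • x i` if that point lies in `Z` and stays at `z` otherwise.
Key step: `μ(A_v¹) + μ(A_v²) + μ(A_{−v}¹) + μ(A_{−v}²) = 2μ(A)`. -/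
theorem stmt19 {n m : ℕ} (Z : Set (Fin n → ℝ))
    (hZc : IsCompact Z) (hZconv : Convex ℝ Z) (hZvol : 0 < volume Z)
    (x : Fin m → Fin n → ℝ)
    (φ : Fin m → ℝ) (hφ : ∀ i, 0 ≤ φ i) (hφ1 : ∑ i, φ i = 1)
    (κ : Fin m → Measure ℝ) (hκ : ∀ i, IsProbabilityMeasure (κ i))
    (hsym : ∀ i, (κ i).map (fun s => -s) = κ i) :
    (∀ A : Set (Fin n → ℝ), MeasurableSet A → A ⊆ Z →
      volume A = ∑ i, ENNReal.ofReal (φ i) *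
        ∫⁻ s, volume { z ∈ Z |
          (z - s • x i ∈ Z ∧ z - s • x i ∈ A) ∨ (z - s • x i ∉ Z ∧ z ∈ A) }
          ∂(κ i)) ∧
    (∀ A : Set (Fin n → ℝ), MeasurableSet A → A ⊆ Z → ∀ v : Fin n → ℝ,
      volume { z ∈ Z | z - v ∈ A } + volume { z ∈ A | z - v ∉ Z } +
        volume { z ∈ Z | z + v ∈ A } + volume { z ∈ A | z + v ∉ Z } =
      2 * volume A) :=
  stmt19_general Z hZc x φ hφ hφ1 κ hκ hsym
end
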